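/- arXiv:1903.11893 — 13 statements merged into one kernel-verified Lean document; each statement's English description precedes it below -/
import Mathlib

section
/- Let v : ℤ → ℝ → ℝ be a family of differentiable functions satisfying for all n ∈ ℤ and t ∈ ℝ the equation v̇_n = v_n (v_{n+2} v_{n+1} − v_{n−1} v_{n−2}). Define u_n(t) = v_{n+1}(t) v_n(t). Then for all n ∈ ℤ and t ∈ ℝ, u̇_n = u_n (u_{n+2} + u_{n+1} − u_{n−1} − u_{n−2}), i.e., u solves the INB equation. -/
theorem HasDerivAt.mul_of_proportional {𝕜 𝔸 : Type*} [NontriviallyNormedField 𝕜]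
    [NormedCommRing 𝔸] [NormedAlgebra 𝕜 𝔸] {f g : 𝕜 → 𝔸} {a b : 𝔸} {x : 𝕜}
    (hf : HasDerivAt f (f x * a) x) (hg : HasDerivAt g (g x * b) x) :
    HasDerivAt (f * g) (f x * g x * (a + b)) x := by
  convert hf.mul hg using 1
  ring

/-- Equation `v̇ₙ = vₙ(v_{n+2} v_{n+1} − v_{n−1} v_{n−2})` is transformed into the
INB equation by the transformation `uₙ = v_{n+1} vₙ`. -/
theorem stmt_1 (v : ℤ → ℝ → ℝ)
    (hv : ∀ (n : ℤ) (t : ℝ), HasDerivAt (v n)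
      (v n t * (v (n + 2) t * v (n + 1) t - v (n - 1) t * v (n - 2) t)) t)
    (u : ℤ → ℝ → ℝ)
    (hu : ∀ (n : ℤ) (t : ℝ), u n t = v (n + 1) t * v n t) :
    ∀ (n : ℤ) (t : ℝ), HasDerivAt (u n)
      (u n t * (u (n + 2) t + u (n + 1) t - u (n - 1) t - u (n - 2) t)) t := by
  intro n t
  rw [show u n = v (n + 1) * v n from funext (hu n)]
  -- The factors of `uₙ` contribute `u_{n+2} − u_{n−1}` and `u_{n+1} − u_{n−2}`.
  refine ((hv (n + 1) t).mul_of_proportional (hv n t)).congr_deriv ?_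
  simp only [hu, Pi.mul_apply]
  ring_nf
end

section
/- Let c ∈ ℝ and let v : ℤ → ℝ → ℝ be a family of differentiable functions with v_n(t) ≠ 0 for all n, t, satisfying for all n ∈ ℤ and t ∈ ℝ the equation v̇_n = v_n ( v_{n+2}/v_{n+1} + 2 v_{n+1}/v_n + 2 v_n/v_{n−1} + v_{n−1}/v_{n−2} ) + c v_n. Define u_n(t) = v_{n+1}(t)/v_n(t). Then for all n ∈ ℤ and t ∈ ℝ, u̇_n = u_n (u_{n+2} + u_{n+1} − u_{n−1} − u_{n−2}), i.e., u solves the INB equation. -/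
/-!
Write the equation for `v` as `v̇ₙ = vₙ rₙ`. Every ratio in `rₙ` is a value of `u`, namely
`rₙ = u_{n+1} + 2uₙ + 2u_{n-1} + u_{n-2} + c`, and the logarithmic derivative of the quotient
`uₙ = v_{n+1}/vₙ` is `r_{n+1} − rₙ`. In this difference `c` cancels and the sum telescopes to
`u_{n+2} + u_{n+1} − u_{n−1} − u_{n−2}`.
-/

section LogDeriv

variable {𝕜 𝕜' : Type*} [NontriviallyNormedField 𝕜] [NontriviallyNormedField 𝕜']
  [NormedAlgebra 𝕜 𝕜'] {f g : 𝕜 → 𝕜'} {a b : 𝕜'} {x : 𝕜}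

theorem HasDerivAt.fun_div_of_eq_mul (hf : HasDerivAt f (f x * a) x)
    (hg : HasDerivAt g (g x * b) x) (hx : g x ≠ 0) :
    HasDerivAt (fun y => f y / g y) (f x / g x * (a - b)) x :=
  (hf.fun_div hg hx).congr_deriv (by field_simp)

end LogDeriv

/-- Equation `v̇ₙ = vₙ(v_{n+2}/v_{n+1} + 2v_{n+1}/vₙ + 2vₙ/v_{n−1} + v_{n−1}/v_{n−2}) + c vₙ`
is transformed into the INB equation by `uₙ = v_{n+1}/vₙ`. -/
theorem stmt_2 (c : ℝ) (v : ℤ → ℝ → ℝ)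
    (hvne : ∀ (n : ℤ) (t : ℝ), v n t ≠ 0)
    (hv : ∀ (n : ℤ) (t : ℝ), HasDerivAt (v n)
      (v n t * (v (n + 2) t / v (n + 1) t + 2 * (v (n + 1) t / v n t)
        + 2 * (v n t / v (n - 1) t) + v (n - 1) t / v (n - 2) t) + c * v n t) t)
    (u : ℤ → ℝ → ℝ)
    (hu : ∀ (n : ℤ) (t : ℝ), u n t = v (n + 1) t / v n t) :
    ∀ (n : ℤ) (t : ℝ), HasDerivAt (u n)
      (u n t * (u (n + 2) t + u (n + 1) t - u (n - 1) t - u (n - 2) t)) t := by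
  intro n t
  have hrate : ∀ m : ℤ, HasDerivAt (v m)
      (v m t * (u (m + 1) t + 2 * u m t + 2 * u (m - 1) t + u (m - 2) t + c)) t := by
    intro m
    have hratios : v (m + 2) t / v (m + 1) t = u (m + 1) t ∧ v m t / v (m - 1) t = u (m - 1) t ∧
        v (m - 1) t / v (m - 2) t = u (m - 2) t := by
      refine ⟨?_, ?_, ?_⟩ <;> rw [hu] <;> ring_nf
    refine (hv m t).congr_deriv ?_
    rw [hratios.1, hratios.2.1, hratios.2.2, ← hu]
    ring
  have hquot := (hrate (n + 1)).fun_div_of_eq_mul (hrate n) (hvne n t)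
  rw [← hu, show (fun s => v (n + 1) s / v n s) = u n from funext fun s => (hu n s).symm,
    show n + 1 + 1 = n + 2 by ring, add_sub_cancel_right, show n + 1 - 2 = n - 1 by ring] at hquot
  exact hquot.congr_deriv (by ring)
end

section
/- Let a, c ∈ ℝ and let v : ℤ → ℝ → ℝ be a family of differentiable functions satisfying for all n ∈ ℤ and t ∈ ℝ the equation v̇_n = (v_{n+2} − v_{n+1} + a)(v_n − v_{n−1} + a) + (v_{n+1} − v_n + a)(v_{n−1} − v_{n−2} + a) + (v_{n+1} − v_n + a)(v_n − v_{n−1} + a) + c. Define u_n(t) = v_{n+1}(t) − v_n(t) + a. Then for all n ∈ ℤ and t ∈ ℝ, u̇_n = u_n (u_{n+2} + u_{n+1} − u_{n−1} − u_{n−2}), i.e., u solves the INB equation. -/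
/-! In terms of `u n = v (n + 1) - v n + a` the equation for `v` reads
`v̇ n = u (n + 1) * u (n - 1) + u n * u (n - 2) + u n * u (n - 1) + c`, so `u̇ n` is the forward
difference of this right-hand side in `n`, in which the mixed products telescope to the
INB right-hand side. -/

def potentialRhs (u : ℤ → ℝ) (c : ℝ) (n : ℤ) : ℝ :=
  u (n + 1) * u (n - 1) + u n * u (n - 2) + u n * u (n - 1) + c

lemma potentialRhs_succ_sub (u : ℤ → ℝ) (c : ℝ) (n : ℤ) :
    potentialRhs u c (n + 1) - potentialRhs u c n =
      u n * (u (n + 2) + u (n + 1) - u (n - 1) - u (n - 2)) := by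
  simp only [potentialRhs, add_sub_cancel_right,
    show n + 1 + 1 = n + 2 by ring, show n + 1 - 2 = n - 1 by ring]
  ring

/-- Equation `v̇ₙ = (v_{n+2}−v_{n+1}+a)(vₙ−v_{n−1}+a) + (v_{n+1}−vₙ+a)(v_{n−1}−v_{n−2}+a)
+ (v_{n+1}−vₙ+a)(vₙ−v_{n−1}+a) + c` is transformed into the INB equation by
`uₙ = v_{n+1} − vₙ + a`. -/
theorem stmt_3 (a c : ℝ) (v : ℤ → ℝ → ℝ)
    (hv : ∀ (n : ℤ) (t : ℝ), HasDerivAt (v n)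
      ((v (n + 2) t - v (n + 1) t + a) * (v n t - v (n - 1) t + a)
        + (v (n + 1) t - v n t + a) * (v (n - 1) t - v (n - 2) t + a)
        + (v (n + 1) t - v n t + a) * (v n t - v (n - 1) t + a) + c) t)
    (u : ℤ → ℝ → ℝ)
    (hu : ∀ (n : ℤ) (t : ℝ), u n t = v (n + 1) t - v n t + a) :
    ∀ (n : ℤ) (t : ℝ), HasDerivAt (u n)
      (u n t * (u (n + 2) t + u (n + 1) t - u (n - 1) t - u (n - 2) t)) t := by
  have hv_rhs : ∀ n t, HasDerivAt (v n) (potentialRhs (u · t) c n) t := by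
    intro n t
    convert hv n t using 1
    simp only [potentialRhs, hu, show n + 1 + 1 = n + 2 by ring, show n - 1 + 1 = n by ring,
      show n - 2 + 1 = n - 1 by ring]
  intro n t
  exact (((hv_rhs (n + 1) t).sub (hv_rhs n t)).add_const a).congr_deriv
    (potentialRhs_succ_sub (u · t) c n) |>.congr_of_eventuallyEq (.of_forall (hu n))
end

section
/- Let φ : ℝ → ℝ be a differentiable function with φ(x) ≠ 0 for all x satisfying the differential equation φ'(x) = (φ(x) − 1)/φ(x). Let c ∈ ℝ and let v : ℤ → ℝ → ℝ be a family of differentiable functions satisfying for all n ∈ ℤ and t ∈ ℝ the equation v̇_n = φ(v_{n+2} − v_{n+1}) φ(v_n − v_{n−1}) + φ(v_{n+1} − v_n) φ(v_{n−1} − v_{n−2}) + φ(v_{n+1} − v_n) φ(v_n − v_{n−1}) + c. Define u_n(t) = φ(v_{n+1}(t) − v_n(t)) − 1. Then for all n ∈ ℤ and t ∈ ℝ, u̇_n = u_n (u_{n+2} + u_{n+1} − u_{n−1} − u_{n−2}), i.e., u solves the INB equation. -/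
/-! The substitution `φ' = (φ - 1)/φ` turns the chain rule for `uₙ = φ(v_{n+1} - vₙ) - 1` into
`u̇ₙ = (φ - 1)/φ · (v̇_{n+1} - v̇ₙ)`, and in `v̇_{n+1} - v̇ₙ` the term `φ(v_{n+1} - vₙ)φ(vₙ - v_{n-1})`
cancels, leaving `φ(v_{n+1} - vₙ)` times `u_{n+2} + u_{n+1} - u_{n-1} - u_{n-2}`; the factor
`φ(v_{n+1} - vₙ)` then cancels against the denominator. -/

theorem HasDerivAt.comp_sub_one_of_deriv_eq_sub_one_div {φ w : ℝ → ℝ} {D t : ℝ}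
    (hw : HasDerivAt w (φ (w t) * D) t) (hφne : φ (w t) ≠ 0)
    (hφ : HasDerivAt φ ((φ (w t) - 1) / φ (w t)) (w t)) :
    HasDerivAt (fun s => φ (w s) - 1) ((φ (w t) - 1) * D) t := by
  refine ((hφ.comp t hw).sub_const 1).congr_deriv ?_
  rw [div_mul_eq_mul_div, div_eq_iff hφne]
  ring

/-- Equation `v̇ₙ = φ(v_{n+2}−v_{n+1})φ(vₙ−v_{n−1}) + φ(v_{n+1}−vₙ)φ(v_{n−1}−v_{n−2})
+ φ(v_{n+1}−vₙ)φ(vₙ−v_{n−1}) + c`, where `φ' = (φ−1)/φ`, is transformed into the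
INB equation by `uₙ = φ(v_{n+1} − vₙ) − 1`. -/
theorem stmt_4 (φ : ℝ → ℝ)
    (hφne : ∀ x : ℝ, φ x ≠ 0)
    (hφ : ∀ x : ℝ, HasDerivAt φ ((φ x - 1) / φ x) x)
    (c : ℝ) (v : ℤ → ℝ → ℝ)
    (hv : ∀ (n : ℤ) (t : ℝ), HasDerivAt (v n)
      (φ (v (n + 2) t - v (n + 1) t) * φ (v n t - v (n - 1) t)
        + φ (v (n + 1) t - v n t) * φ (v (n - 1) t - v (n - 2) t)
        + φ (v (n + 1) t - v n t) * φ (v n t - v (n - 1) t) + c) t)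
    (u : ℤ → ℝ → ℝ)
    (hu : ∀ (n : ℤ) (t : ℝ), u n t = φ (v (n + 1) t - v n t) - 1) :
    ∀ (n : ℤ) (t : ℝ), HasDerivAt (u n)
      (u n t * (u (n + 2) t + u (n + 1) t - u (n - 1) t - u (n - 2) t)) t := by
  intro n t
  have hdiff : HasDerivAt (fun s => v (n + 1) s - v n s) (φ (v (n + 1) t - v n t) *
      (u (n + 2) t + u (n + 1) t - u (n - 1) t - u (n - 2) t)) t := by
    refine ((hv (n + 1) t).sub (hv n t)).congr_deriv ?_
    simp only [hu]
    ring_nf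
  rw [show u n = fun s => φ (v (n + 1) s - v n s) - 1 from funext (hu n)]
  exact hdiff.comp_sub_one_of_deriv_eq_sub_one_div (hφne _) (hφ _)
end

section
/- Let w : ℤ → ℝ → ℝ be a family of differentiable functions satisfying for all n ∈ ℤ and t ∈ ℝ the equation ẇ_n = w_n² (w_{n+2} w_{n+1} − w_{n−1} w_{n−2}). Define u_n(t) = w_{n+2}(t) w_{n+1}(t) w_n(t). Then for all n ∈ ℤ and t ∈ ℝ, u̇_n = u_n (u_{n+2} + u_{n+1} − u_{n−1} − u_{n−2}), i.e., u solves the INB equation. -/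
/-! Writing the lattice equation as `ẇₙ = wₙ (uₙ − uₙ₋₂)`, the logarithmic derivative of
`uₙ = wₙ₊₂ wₙ₊₁ wₙ` is the telescoping sum `(uₙ₊₂ − uₙ) + (uₙ₊₁ − uₙ₋₁) + (uₙ − uₙ₋₂)`. -/

theorem HasDerivAt.mul_mul_of_logDeriv {f g h : ℝ → ℝ} {a b c t : ℝ}
    (hf : HasDerivAt f (f t * a) t) (hg : HasDerivAt g (g t * b) t)
    (hh : HasDerivAt h (h t * c) t) :
    HasDerivAt (fun s => f s * g s * h s) (f t * g t * h t * (a + b + c)) t := by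
  refine ((hf.mul hg).mul hh).congr_deriv ?_
  rw [Pi.mul_apply]
  ring

/-- Equation `ẇₙ = wₙ²(w_{n+2} w_{n+1} − w_{n−1} w_{n−2})` is transformed into the
INB equation by `uₙ = w_{n+2} w_{n+1} wₙ`. -/
theorem stmt_5 (w : ℤ → ℝ → ℝ)
    (hw : ∀ (n : ℤ) (t : ℝ), HasDerivAt (w n)
      ((w n t) ^ 2 * (w (n + 2) t * w (n + 1) t - w (n - 1) t * w (n - 2) t)) t)
    (u : ℤ → ℝ → ℝ)
    (hu : ∀ (n : ℤ) (t : ℝ), u n t = w (n + 2) t * w (n + 1) t * w n t) :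
    ∀ (n : ℤ) (t : ℝ), HasDerivAt (u n)
      (u n t * (u (n + 2) t + u (n + 1) t - u (n - 1) t - u (n - 2) t)) t := by
  intro n t
  have hw_logDeriv : ∀ m, HasDerivAt (w m) (w m t * (u m t - u (m - 2) t)) t := by
    intro m
    convert hw m t using 1
    rw [hu, hu, show m - 2 + 2 = m by ring, show m - 2 + 1 = m - 1 by ring]
    ring
  rw [show u n = fun s => w (n + 2) s * w (n + 1) s * w n s from funext (hu n)]
  convert (hw_logDeriv (n + 2)).mul_mul_of_logDeriv (hw_logDeriv (n + 1)) (hw_logDeriv n) using 1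
  rw [show n + 2 - 2 = n by ring, show n + 1 - 2 = n - 1 by ring, hu n t]
  ring
end

section
/- Let w : ℤ → ℝ → ℝ be a family of differentiable functions satisfying for all n ∈ ℤ and t ∈ ℝ the equation ẇ_n = (w_{n+1} + w_n)(w_n + w_{n−1})(w_{n+2} + w_{n+1} − w_{n−1} − w_{n−2}). Define u_n(t) = (w_{n+2}(t) + w_{n+1}(t))(w_{n+1}(t) + w_n(t)). Then for all n ∈ ℤ and t ∈ ℝ, u̇_n = u_n (u_{n+2} + u_{n+1} − u_{n−1} − u_{n−2}), i.e., u solves the INB equation. -/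
/-!
The substitution `uₙ = (w_{n+2} + w_{n+1})(w_{n+1} + wₙ)` is a Miura map. By the product rule
`u̇ₙ` is a bilinear expression in `w` and `ẇ`, and once `ẇ` is replaced by the right-hand side of
the modified equation, the result coincides with the INB right-hand side evaluated at `u`: this is
a polynomial identity in `w_{n-2}, …, w_{n+4}`, valid in any commutative ring.
-/

section Algebra

variable {R : Type*} [CommRing R]

def miuraMap (w : ℤ → R) (n : ℤ) : R :=
  (w (n + 2) + w (n + 1)) * (w (n + 1) + w n)

def inbField (u : ℤ → R) (n : ℤ) : R :=
  u n * (u (n + 2) + u (n + 1) - u (n - 1) - u (n - 2))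

def modifiedInbField (w : ℤ → R) (n : ℤ) : R :=
  (w (n + 1) + w n) * (w n + w (n - 1)) * (w (n + 2) + w (n + 1) - w (n - 1) - w (n - 2))

theorem inbField_miuraMap (w : ℤ → R) (n : ℤ) :
    inbField (miuraMap w) n =
      (modifiedInbField w (n + 2) + modifiedInbField w (n + 1)) * (w (n + 1) + w n) +
        (w (n + 2) + w (n + 1)) * (modifiedInbField w (n + 1) + modifiedInbField w n) := by
  simp only [inbField, miuraMap, modifiedInbField]
  ring_nf

end Algebra

theorem hasDerivAt_miuraMap {w w' : ℤ → ℝ → ℝ} {t : ℝ} (n : ℤ)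
    (hw : ∀ k, HasDerivAt (w k) (w' k t) t) :
    HasDerivAt (fun s => miuraMap (fun k => w k s) n)
      ((w' (n + 2) t + w' (n + 1) t) * (w (n + 1) t + w n t) +
        (w (n + 2) t + w (n + 1) t) * (w' (n + 1) t + w' n t)) t :=
  ((hw (n + 2)).add (hw (n + 1))).mul ((hw (n + 1)).add (hw n))

/-- Equation `ẇₙ = (w_{n+1}+wₙ)(wₙ+w_{n−1})(w_{n+2}+w_{n+1}−w_{n−1}−w_{n−2})` is
transformed into the INB equation by `uₙ = (w_{n+2}+w_{n+1})(w_{n+1}+wₙ)`. -/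
theorem stmt_6 (w : ℤ → ℝ → ℝ)
    (hw : ∀ (n : ℤ) (t : ℝ), HasDerivAt (w n)
      ((w (n + 1) t + w n t) * (w n t + w (n - 1) t)
        * (w (n + 2) t + w (n + 1) t - w (n - 1) t - w (n - 2) t)) t)
    (u : ℤ → ℝ → ℝ)
    (hu : ∀ (n : ℤ) (t : ℝ), u n t = (w (n + 2) t + w (n + 1) t) * (w (n + 1) t + w n t)) :
    ∀ (n : ℤ) (t : ℝ), HasDerivAt (u n)
      (u n t * (u (n + 2) t + u (n + 1) t - u (n - 1) t - u (n - 2) t)) t := by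
  obtain rfl : u = fun n s => miuraMap (fun k => w k s) n := funext₂ hu
  intro n t
  change HasDerivAt _ (inbField (miuraMap fun k => w k t) n) t
  rw [inbField_miuraMap]
  exact hasDerivAt_miuraMap (w' := fun k t => modifiedInbField (fun j => w j t) k) n (hw · t)
end

section
/- Let a, c ∈ ℝ and let w : ℤ → ℝ → ℝ be a family of differentiable functions satisfying for all n ∈ ℤ and t ∈ ℝ the equation ẇ_n = (w_{n+1} − w_n + a)(w_n − w_{n−1} + a)(w_{n+2} − w_{n+1} + w_{n−1} − w_{n−2} + 2a) + c. Define u_n(t) = (w_{n+2}(t) − w_{n+1}(t) + a)(w_{n+1}(t) − w_n(t) + a). Then for all n ∈ ℤ and t ∈ ℝ, u̇_n = u_n (u_{n+2} + u_{n+1} − u_{n−1} − u_{n−2}), i.e., u solves the INB equation. -/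
/-!
In terms of the differences `vₙ = w_{n+1} − wₙ + a` the equation for `w` reads
`ẇₙ = vₙ v_{n−1} (v_{n+1} + v_{n−2}) + c`. Subtracting consecutive equations, the constant `c`
and the cross terms `v_{n+1} vₙ v_{n−1}` cancel, so `v` solves the modified INB equation
`v̇ₙ = vₙ (v_{n+1} v_{n+2} − v_{n−1} v_{n−2})`. The Miura map `uₙ = v_{n+1} vₙ` then carries
solutions of the modified INB equation to solutions of the INB equation, by the product rule.
-/

theorem hasDerivAt_modifiedINB_of_potential (a c : ℝ) (w v : ℤ → ℝ → ℝ)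
    (hv : ∀ n t, v n t = w (n + 1) t - w n t + a)
    (hw : ∀ n t, HasDerivAt (w n) (v n t * v (n - 1) t * (v (n + 1) t + v (n - 2) t) + c) t)
    (n : ℤ) (t : ℝ) :
    HasDerivAt (v n) (v n t * (v (n + 1) t * v (n + 2) t - v (n - 1) t * v (n - 2) t)) t := by
  refine ((((hw (n + 1) t).sub (hw n t)).add_const a).congr_of_eventuallyEq
    (.of_forall (hv n))).congr_deriv ?_
  ring_nf

theorem hasDerivAt_INB_of_modifiedINB (v u : ℤ → ℝ → ℝ)
    (hv : ∀ n t, HasDerivAt (v n)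
      (v n t * (v (n + 1) t * v (n + 2) t - v (n - 1) t * v (n - 2) t)) t)
    (hu : ∀ n t, u n t = v (n + 1) t * v n t) (n : ℤ) (t : ℝ) :
    HasDerivAt (u n) (u n t * (u (n + 2) t + u (n + 1) t - u (n - 1) t - u (n - 2) t)) t := by
  refine (((hv (n + 1) t).mul (hv n t)).congr_of_eventuallyEq (.of_forall (hu n))).congr_deriv ?_
  simp only [hu]
  ring_nf

/-- Equation `ẇₙ = (w_{n+1}−wₙ+a)(wₙ−w_{n−1}+a)(w_{n+2}−w_{n+1}+w_{n−1}−w_{n−2}+2a) + c`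
is transformed into the INB equation by `uₙ = (w_{n+2}−w_{n+1}+a)(w_{n+1}−wₙ+a)`. -/
theorem stmt_7 (a c : ℝ) (w : ℤ → ℝ → ℝ)
    (hw : ∀ (n : ℤ) (t : ℝ), HasDerivAt (w n)
      ((w (n + 1) t - w n t + a) * (w n t - w (n - 1) t + a)
        * (w (n + 2) t - w (n + 1) t + w (n - 1) t - w (n - 2) t + 2 * a) + c) t)
    (u : ℤ → ℝ → ℝ)
    (hu : ∀ (n : ℤ) (t : ℝ),
      u n t = (w (n + 2) t - w (n + 1) t + a) * (w (n + 1) t - w n t + a)) :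
    ∀ (n : ℤ) (t : ℝ), HasDerivAt (u n)
      (u n t * (u (n + 2) t + u (n + 1) t - u (n - 1) t - u (n - 2) t)) t := by
  let v : ℤ → ℝ → ℝ := fun n s => w (n + 1) s - w n s + a
  have hw_v : ∀ n t, HasDerivAt (w n) (v n t * v (n - 1) t * (v (n + 1) t + v (n - 2) t) + c) t :=
    fun n t => (hw n t).congr_deriv (by simp only [v]; ring_nf)
  have hu_v : ∀ n t, u n t = v (n + 1) t * v n t := fun n t => by
    simp only [hu, v]
    ring_nf
  exact hasDerivAt_INB_of_modifiedINB v u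
    (hasDerivAt_modifiedINB_of_potential a c w v (fun _ _ => rfl) hw_v) hu_v
end

section
/- Let w : ℤ → ℝ → ℝ be a family of differentiable functions with w_n(t) ≠ 0 for all n, t, satisfying for all n ∈ ℤ and t ∈ ℝ the equation ẇ_n = (w_{n+1} − w_n)(w_n − w_{n−1})( w_{n+2}/w_{n+1} − w_{n−2}/w_{n−1} ). Define u_n(t) = (w_{n+2}(t) − w_{n+1}(t))(w_{n+1}(t) − w_n(t)) / w_{n+1}(t). Then for all n ∈ ℤ and t ∈ ℝ, u̇_n = u_n (u_{n+2} + u_{n+1} − u_{n−1} − u_{n−2}), i.e., u solves the INB equation. -/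
/-!
`u` is the image of `w` under the Miura-type map
`w ↦ (w_{n+2} - w_{n+1}) (w_{n+1} - w_n) / w_{n+1}`. Differentiating it by the product and quotient
rules expresses `u̇_n` through `ẇ_n, ẇ_{n+1}, ẇ_{n+2}`; substituting the equation for `w` leaves a
rational identity in `w_{n-2}, …, w_{n+4}`, which is the INB right-hand side of `u`.
-/

namespace INB

noncomputable section

def rhs (u : ℤ → ℝ) (n : ℤ) : ℝ :=
  u n * (u (n + 2) + u (n + 1) - u (n - 1) - u (n - 2))

def modRhs (w : ℤ → ℝ) (n : ℤ) : ℝ :=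
  (w (n + 1) - w n) * (w n - w (n - 1)) * (w (n + 2) / w (n + 1) - w (n - 2) / w (n - 1))

def miura (w : ℤ → ℝ) (n : ℤ) : ℝ :=
  (w (n + 2) - w (n + 1)) * (w (n + 1) - w n) / w (n + 1)

def miuraDeriv (w v : ℤ → ℝ) (n : ℤ) : ℝ :=
  ((v (n + 2) - v (n + 1)) * (w (n + 1) - w n) + (w (n + 2) - w (n + 1)) * (v (n + 1) - v n)
    - miura w n * v (n + 1)) / w (n + 1)

end

theorem hasDerivAt_miura {w : ℤ → ℝ → ℝ} {v : ℤ → ℝ} {t : ℝ} (n : ℤ)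
    (hw : ∀ k, HasDerivAt (w k) (v k) t) (hne : w (n + 1) t ≠ 0) :
    HasDerivAt (fun s ↦ miura (w · s) n) (miuraDeriv (w · t) v n) t := by
  have h := (((hw (n + 2)).sub (hw (n + 1))).mul ((hw (n + 1)).sub (hw n))).div (hw (n + 1)) hne
  refine h.congr_deriv ?_
  simp only [miuraDeriv, miura, Pi.sub_apply, Pi.mul_apply]
  field_simp

theorem miuraDeriv_modRhs {w : ℤ → ℝ} (hw : ∀ k, w k ≠ 0) (n : ℤ) :
    miuraDeriv w (modRhs w) n = rhs (miura w) n := by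
  have h₁ := hw (n - 1)
  have h₂ := hw n
  have h₃ := hw (n + 1)
  have h₄ := hw (n + 2)
  have h₅ := hw (n + 3)
  simp only [miuraDeriv, modRhs, rhs, miura]
  -- brings indices such as `n + 2 + 1` and `n + 3` to a common normal form
  ring_nf at h₁ h₂ h₃ h₄ h₅ ⊢
  field_simp
  ring

end INB

/-- Equation `ẇₙ = (w_{n+1}−wₙ)(wₙ−w_{n−1})(w_{n+2}/w_{n+1} − w_{n−2}/w_{n−1})` is
transformed into the INB equation by `uₙ = (w_{n+2}−w_{n+1})(w_{n+1}−wₙ)/w_{n+1}`. -/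
theorem stmt_8 (w : ℤ → ℝ → ℝ)
    (hwne : ∀ (n : ℤ) (t : ℝ), w n t ≠ 0)
    (hw : ∀ (n : ℤ) (t : ℝ), HasDerivAt (w n)
      ((w (n + 1) t - w n t) * (w n t - w (n - 1) t)
        * (w (n + 2) t / w (n + 1) t - w (n - 2) t / w (n - 1) t)) t)
    (u : ℤ → ℝ → ℝ)
    (hu : ∀ (n : ℤ) (t : ℝ),
      u n t = (w (n + 2) t - w (n + 1) t) * (w (n + 1) t - w n t) / w (n + 1) t) :
    ∀ (n : ℤ) (t : ℝ), HasDerivAt (u n)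
      (u n t * (u (n + 2) t + u (n + 1) t - u (n - 1) t - u (n - 2) t)) t := by
  intro n t
  have hu_eq : u = fun k s ↦ INB.miura (w · s) k := funext fun k ↦ funext (hu k)
  have h := INB.hasDerivAt_miura (v := INB.modRhs (w · t)) n (hw · t) (hwne (n + 1) t)
  rw [INB.miuraDeriv_modRhs (hwne · t)] at h
  subst hu_eq
  exact h
end

section
/- Let c ∈ ℝ and let z : ℤ → ℝ → ℝ be a family of differentiable functions with z_n(t) ≠ 0 for all n, t, satisfying for all n ∈ ℤ and t ∈ ℝ the equation ż_n = z_n ( z_{n+2}/z_{n−1} + z_{n+1}/z_{n−2} ) + c z_n. Define u_n(t) = z_{n+3}(t)/z_n(t). Then for all n ∈ ℤ and t ∈ ℝ, u̇_n = u_n (u_{n+2} + u_{n+1} − u_{n−1} − u_{n−2}), i.e., u solves the INB equation. -/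
/-! The transformation works at the level of logarithmic derivatives: the equation says
`żₙ / zₙ = z_{n+2}/z_{n−1} + z_{n+1}/z_{n−2} + c`, and the logarithmic derivative of
`uₙ = z_{n+3}/zₙ` is the difference of those of `z_{n+3}` and `zₙ`. In that difference the
constant `c` cancels and the four remaining quotients are exactly
`u_{n+2}, u_{n+1}, u_{n−1}, u_{n−2}`. -/

theorem HasDerivAt.div_of_logDeriv {𝕜 : Type*} [NontriviallyNormedField 𝕜] {f g : 𝕜 → 𝕜}
    {a b x : 𝕜} (hf : HasDerivAt f (f x * a) x) (hg : HasDerivAt g (g x * b) x)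
    (hx : g x ≠ 0) : HasDerivAt (fun y => f y / g y) (f x / g x * (a - b)) x :=
  (hf.div hg hx).congr_deriv (by field_simp)

/-- Equation `żₙ = zₙ(z_{n+2}/z_{n−1} + z_{n+1}/z_{n−2}) + c zₙ` is transformed into
the INB equation by the third-order transformation `uₙ = z_{n+3}/zₙ`. -/
theorem stmt_11 (c : ℝ) (z : ℤ → ℝ → ℝ)
    (hzne : ∀ (n : ℤ) (t : ℝ), z n t ≠ 0)
    (hz : ∀ (n : ℤ) (t : ℝ), HasDerivAt (z n)
      (z n t * (z (n + 2) t / z (n - 1) t + z (n + 1) t / z (n - 2) t) + c * z n t) t)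
    (u : ℤ → ℝ → ℝ)
    (hu : ∀ (n : ℤ) (t : ℝ), u n t = z (n + 3) t / z n t) :
    ∀ (n : ℤ) (t : ℝ), HasDerivAt (u n)
      (u n t * (u (n + 2) t + u (n + 1) t - u (n - 1) t - u (n - 2) t)) t := by
  intro n t
  have hlog : ∀ m, HasDerivAt (z m)
      (z m t * (z (m + 2) t / z (m - 1) t + z (m + 1) t / z (m - 2) t + c)) t :=
    fun m => (hz m t).congr_deriv (by ring)
  have hquot := (hlog (n + 3)).div_of_logDeriv (hlog n) (hzne n t)
  rw [← funext (hu n)] at hquot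
  refine hquot.congr_deriv ?_
  simp only [hu]
  ring_nf -- also normalizes the indices, e.g. `n + 3 + 2` and `n + 2 + 3`
end

section
/- Let z : ℤ → ℝ → ℝ be a family of differentiable functions satisfying for all n ∈ ℤ and t ∈ ℝ the equation ż_n = z_{n+1} z_n³ z_{n−1} (z_{n+2} z_{n+1} − z_{n−1} z_{n−2}). Define u_n(t) = z_{n+3}(t) z_{n+2}(t)² z_{n+1}(t)² z_n(t). Then for all n ∈ ℤ and t ∈ ℝ, u̇_n = u_n (u_{n+2} + u_{n+1} − u_{n−1} − u_{n−2}), i.e., u solves the INB equation. -/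
/-!
Along a solution, `ż_n = z_n (u_{n-1} - u_{n-2})`: the bracket in the `z`-equation, multiplied by
`z_{n+1} z_n² z_{n-1}`, is exactly `u_{n-1} - u_{n-2}`. Logarithmic derivatives add over products,
so `u̇_n / u_n = w_{n+3} + 2 w_{n+2} + 2 w_{n+1} + w_n` with `w_m = u_{m-1} - u_{m-2}`, and this
sum telescopes to `u_{n+2} + u_{n+1} - u_{n-1} - u_{n-2}`.
-/

/-- Division-free `logDeriv f x = a`: Mathlib's `logDeriv` divides by `f`, this stays meaningful
where `f` vanishes. -/
def HasLogDerivAt {𝕜 : Type*} [NontriviallyNormedField 𝕜] (f : 𝕜 → 𝕜) (a x : 𝕜) : Prop :=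
  HasDerivAt f (f x * a) x

namespace HasLogDerivAt

variable {𝕜 : Type*} [NontriviallyNormedField 𝕜] {f g : 𝕜 → 𝕜} {a b x : 𝕜}

theorem mul (hf : HasLogDerivAt f a x) (hg : HasLogDerivAt g b x) :
    HasLogDerivAt (f * g) (a + b) x :=
  (HasDerivAt.mul hf hg).congr_deriv (by simp only [Pi.mul_apply]; ring)

theorem pow (hf : HasLogDerivAt f a x) (k : ℕ) : HasLogDerivAt (f ^ k) (k * a) x :=
  (HasDerivAt.pow hf k).congr_deriv <| by
    rcases k with _ | k
    · simp
    · simp only [Pi.pow_apply]; push_cast; ring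

end HasLogDerivAt

theorem hasLogDerivAt_z_sub_u {z u : ℤ → ℝ → ℝ}
    (hz : ∀ (n : ℤ) (t : ℝ), HasDerivAt (z n)
      (z (n + 1) t * (z n t) ^ 3 * z (n - 1) t
        * (z (n + 2) t * z (n + 1) t - z (n - 1) t * z (n - 2) t)) t)
    (hu : ∀ (n : ℤ) (t : ℝ),
      u n t = z (n + 3) t * (z (n + 2) t) ^ 2 * (z (n + 1) t) ^ 2 * z n t) (n : ℤ) (t : ℝ) :
    HasLogDerivAt (z n) (u (n - 1) t - u (n - 2) t) t :=
  (hz n t).congr_deriv (by rw [hu, hu]; ring_nf)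

/-- Equation `żₙ = z_{n+1} zₙ³ z_{n−1}(z_{n+2} z_{n+1} − z_{n−1} z_{n−2})` is transformed
into the INB equation by `uₙ = z_{n+3} z_{n+2}² z_{n+1}² zₙ`. -/
theorem stmt_12 (z : ℤ → ℝ → ℝ)
    (hz : ∀ (n : ℤ) (t : ℝ), HasDerivAt (z n)
      (z (n + 1) t * (z n t) ^ 3 * z (n - 1) t
        * (z (n + 2) t * z (n + 1) t - z (n - 1) t * z (n - 2) t)) t)
    (u : ℤ → ℝ → ℝ)
    (hu : ∀ (n : ℤ) (t : ℝ),
      u n t = z (n + 3) t * (z (n + 2) t) ^ 2 * (z (n + 1) t) ^ 2 * z n t) :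
    ∀ (n : ℤ) (t : ℝ), HasDerivAt (u n)
      (u n t * (u (n + 2) t + u (n + 1) t - u (n - 1) t - u (n - 2) t)) t := by
  intro n t
  have hw := hasLogDerivAt_z_sub_u hz hu
  have hun : u n = z (n + 3) * z (n + 2) ^ 2 * z (n + 1) ^ 2 * z n := funext (hu n)
  have hlog : HasLogDerivAt (u n) _ t := hun ▸
    (((hw (n + 3) t).mul ((hw (n + 2) t).pow 2)).mul ((hw (n + 1) t).pow 2)).mul (hw n t)
  refine hlog.congr_deriv ?_
  push_cast
  ring_nf
end

section
/- Let a, c ∈ ℝ and let z : ℤ → ℝ → ℝ be a family of differentiable functions satisfying for all n ∈ ℤ and t ∈ ℝ the equation ż_n = (z_{n+2} − z_n + a)(z_{n+1} − z_{n−1} + a)(z_n − z_{n−2} + a) + c. Define u_n(t) = (z_{n+3}(t) − z_{n+1}(t) + a)(z_{n+2}(t) − z_n(t) + a). Then for all n ∈ ℤ and t ∈ ℝ, u̇_n = u_n (u_{n+2} + u_{n+1} − u_{n−1} − u_{n−2}), i.e., u solves the INB equation. -/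
/-! With `wₙ = z_{n+2} − zₙ + a` one has `uₙ = w_{n+1} wₙ`, and the equation for `z` gives
`ẇₙ = wₙ (w_{n+2} w_{n+1} − w_{n−1} w_{n−2}) = wₙ (u_{n+1} − u_{n−2})`, the constant `c`
cancelling in the difference. The Leibniz rule for `u̇ₙ = ẇ_{n+1} wₙ + w_{n+1} ẇₙ` then yields
the INB equation. -/

def IsINBSolution (u : ℤ → ℝ → ℝ) : Prop :=
  ∀ n t, HasDerivAt (u n) (u n t * (u (n + 2) t + u (n + 1) t - u (n - 1) t - u (n - 2) t)) t

theorem hasDerivAt_of_eq_sub_add {a c : ℝ} {z w : ℤ → ℝ → ℝ}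
    (hz : ∀ n t, HasDerivAt (z n)
      ((z (n + 2) t - z n t + a) * (z (n + 1) t - z (n - 1) t + a)
        * (z n t - z (n - 2) t + a) + c) t)
    (hw : ∀ n t, w n t = z (n + 2) t - z n t + a) (n : ℤ) (t : ℝ) :
    HasDerivAt (w n) (w n t * (w (n + 2) t * w (n + 1) t - w (n - 1) t * w (n - 2) t)) t := by
  rw [show w n = fun s => z (n + 2) s - z n s + a from funext (hw n)]
  refine (((hz (n + 2) t).sub (hz n t)).add_const a).congr_deriv ?_
  simp only [hw]
  ring_nf

theorem isINBSolution_of_eq_mul_succ {w u : ℤ → ℝ → ℝ}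
    (hw : ∀ n t, HasDerivAt (w n)
      (w n t * (w (n + 2) t * w (n + 1) t - w (n - 1) t * w (n - 2) t)) t)
    (hu : ∀ n t, u n t = w (n + 1) t * w n t) : IsINBSolution u := by
  intro n t
  rw [show u n = w (n + 1) * w n from funext (hu n)]
  refine ((hw (n + 1) t).mul (hw n t)).congr_deriv ?_
  simp only [hu, Pi.mul_apply]
  ring_nf

/-- Equation `żₙ = (z_{n+2}−zₙ+a)(z_{n+1}−z_{n−1}+a)(zₙ−z_{n−2}+a) + c` is transformed
into the INB equation by `uₙ = (z_{n+3}−z_{n+1}+a)(z_{n+2}−zₙ+a)`. -/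
theorem stmt_13 (a c : ℝ) (z : ℤ → ℝ → ℝ)
    (hz : ∀ (n : ℤ) (t : ℝ), HasDerivAt (z n)
      ((z (n + 2) t - z n t + a) * (z (n + 1) t - z (n - 1) t + a)
        * (z n t - z (n - 2) t + a) + c) t)
    (u : ℤ → ℝ → ℝ)
    (hu : ∀ (n : ℤ) (t : ℝ),
      u n t = (z (n + 3) t - z (n + 1) t + a) * (z (n + 2) t - z n t + a)) :
    ∀ (n : ℤ) (t : ℝ), HasDerivAt (u n)
      (u n t * (u (n + 2) t + u (n + 1) t - u (n - 1) t - u (n - 2) t)) t := by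
  set w : ℤ → ℝ → ℝ := fun n t => z (n + 2) t - z n t + a
  have hu_w : ∀ n t, u n t = w (n + 1) t * w n t := fun n t => by
    simp only [hu, w, add_assoc]
    norm_num
  exact isINBSolution_of_eq_mul_succ (hasDerivAt_of_eq_sub_add hz fun _ _ => rfl) hu_w
end

section
/- Let z : ℤ → ℝ → ℝ be a family of differentiable functions satisfying for all n ∈ ℤ and t ∈ ℝ the equation ż_n = z_n (z_{n+1} z_n − 1)(z_n z_{n−1} − 1)(z_{n+2} z_{n+1} − z_{n−1} z_{n−2}). Define u_n(t) = (z_{n+3}(t) z_{n+2}(t) − 1)(z_{n+2}(t) z_{n+1}(t) − 1) z_{n+1}(t) z_n(t). Then for all n ∈ ℤ and t ∈ ℝ, u̇_n = u_n (u_{n+2} + u_{n+1} − u_{n−1} − u_{n−2}), i.e., u solves the INB equation. -/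
/-!
Since `uₙ` is a polynomial in `zₙ, …, z_{n+3}`, the product rule expresses `u̇ₙ` through
`żₙ, …, ż_{n+3}`. Substituting the equation for `ż` turns it into
`uₙ (u_{n+2} + u_{n+1} − u_{n−1} − u_{n−2})` by a polynomial identity in `z_{n−2}, …, z_{n+5}`.
-/

section Algebra

variable {R : Type*} [CommRing R]

def miura (z : ℤ → R) (n : ℤ) : R :=
  (z (n + 3) * z (n + 2) - 1) * (z (n + 2) * z (n + 1) - 1) * z (n + 1) * z n

def miuraDeriv (z w : ℤ → R) (n : ℤ) : R :=
  (w (n + 3) * z (n + 2) + z (n + 3) * w (n + 2)) * (z (n + 2) * z (n + 1) - 1) * z (n + 1) * z n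
    + (z (n + 3) * z (n + 2) - 1) * (w (n + 2) * z (n + 1) + z (n + 2) * w (n + 1)) * z (n + 1) * z n
    + (z (n + 3) * z (n + 2) - 1) * (z (n + 2) * z (n + 1) - 1) * (w (n + 1) * z n + z (n + 1) * w n)

def zVectorField (z : ℤ → R) (n : ℤ) : R :=
  z n * (z (n + 1) * z n - 1) * (z n * z (n - 1) - 1)
    * (z (n + 2) * z (n + 1) - z (n - 1) * z (n - 2))

def inbVectorField (u : ℤ → R) (n : ℤ) : R :=
  u n * (u (n + 2) + u (n + 1) - u (n - 1) - u (n - 2))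

theorem miuraDeriv_zVectorField (z : ℤ → R) (n : ℤ) :
    miuraDeriv z (zVectorField z) n = inbVectorField (miura z) n := by
  simp only [miuraDeriv, zVectorField, inbVectorField, miura]
  -- `ring_nf` also normalises the indices, so that e.g. `z (n + 2 + 1)` and `z (n + 3)` match.
  ring_nf

end Algebra

theorem hasDerivAt_miura {𝕜 𝔸 : Type*} [NontriviallyNormedField 𝕜] [NormedCommRing 𝔸]
    [NormedAlgebra 𝕜 𝔸] {z w : ℤ → 𝕜 → 𝔸} {t : 𝕜}
    (hz : ∀ n, HasDerivAt (z n) (w n t) t) (n : ℤ) :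
    HasDerivAt (fun s ↦ miura (fun k ↦ z k s) n)
      (miuraDeriv (fun k ↦ z k t) (fun k ↦ w k t) n) t := by
  have h := ((((hz (n + 3)).fun_mul (hz (n + 2))).sub_const 1).fun_mul
    (((hz (n + 2)).fun_mul (hz (n + 1))).sub_const 1)).fun_mul (hz (n + 1)) |>.fun_mul (hz n)
  exact h.congr_deriv (by simp only [miuraDeriv]; ring)

/-- Equation `żₙ = zₙ(z_{n+1}zₙ−1)(zₙz_{n−1}−1)(z_{n+2}z_{n+1} − z_{n−1}z_{n−2})` is
transformed into the INB equation by
`uₙ = (z_{n+3}z_{n+2}−1)(z_{n+2}z_{n+1}−1) z_{n+1} zₙ`. -/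
theorem stmt_14 (z : ℤ → ℝ → ℝ)
    (hz : ∀ (n : ℤ) (t : ℝ), HasDerivAt (z n)
      (z n t * (z (n + 1) t * z n t - 1) * (z n t * z (n - 1) t - 1)
        * (z (n + 2) t * z (n + 1) t - z (n - 1) t * z (n - 2) t)) t)
    (u : ℤ → ℝ → ℝ)
    (hu : ∀ (n : ℤ) (t : ℝ),
      u n t = (z (n + 3) t * z (n + 2) t - 1) * (z (n + 2) t * z (n + 1) t - 1)
        * z (n + 1) t * z n t) :
    ∀ (n : ℤ) (t : ℝ), HasDerivAt (u n)
      (u n t * (u (n + 2) t + u (n + 1) t - u (n - 1) t - u (n - 2) t)) t := by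
  intro n t
  obtain rfl : u = fun k s ↦ miura (fun j ↦ z j s) k := funext₂ hu
  have h := hasDerivAt_miura (w := fun k s ↦ zVectorField (fun j ↦ z j s) k) (hz · t) n
  rwa [miuraDeriv_zVectorField] at h
end

section
/- Let z : ℤ → ℝ → ℝ be a family of differentiable functions satisfying for all n ∈ ℤ and t ∈ ℝ the equation ż_n = z_n (z_{n+1} z_n − 1)(z_n z_{n−1} − 1)(z_{n+2} z_{n+1} − z_{n−1} z_{n−2}). Define w_n(t) = z_{n+1}(t) z_n(t) − 1. Then for all n ∈ ℤ and t ∈ ℝ, ẇ_n = w_n (w_n + 1)(w_{n+2} w_{n+1} − w_{n−1} w_{n−2}), i.e., the transformation w_n = z_{n+1} z_n − 1 maps solutions of the third-level modification to solutions of the second-level modification ẇ_n = w_n(w_n+1)(w_{n+2} w_{n+1} − w_{n−1} w_{n−2}) of the INB equation. -/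
/-!
Writing `wₙ = z_{n+1} zₙ − 1`, the equation for `z` says that the logarithmic derivative of `zₙ`
is `wₙ w_{n−1} (w_{n+1} − w_{n−2})`. The logarithmic derivative of `wₙ + 1 = z_{n+1} zₙ` is the sum
of those of `z_{n+1}` and `zₙ`, and in that sum the cross terms `± w_{n+1} wₙ w_{n−1}` cancel,
leaving `wₙ (w_{n+2} w_{n+1} − w_{n−1} w_{n−2})`.
-/

theorem HasDerivAt.mul_of_logDeriv {𝕜 : Type*} [NontriviallyNormedField 𝕜] {f g : 𝕜 → 𝕜}
    {p q x : 𝕜} (hf : HasDerivAt f (f x * p) x) (hg : HasDerivAt g (g x * q) x) :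
    HasDerivAt (fun y => f y * g y) (f x * g x * (p + q)) x :=
  (hf.mul hg).congr_deriv (by ring)

theorem thirdLevelRhs_eq_of_miura {z w : ℤ → ℝ → ℝ}
    (hw : ∀ (n : ℤ) (t : ℝ), w n t = z (n + 1) t * z n t - 1) (n : ℤ) (t : ℝ) :
    z n t * (z (n + 1) t * z n t - 1) * (z n t * z (n - 1) t - 1)
        * (z (n + 2) t * z (n + 1) t - z (n - 1) t * z (n - 2) t)
      = z n t * (w n t * w (n - 1) t * (w (n + 1) t - w (n - 2) t)) := by
  rw [hw n, hw (n - 1), hw (n + 1), hw (n - 2), sub_add_cancel,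
    show n + 1 + 1 = n + 2 by ring, show n - 2 + 1 = n - 1 by ring]
  ring

/-- The transformation `wₙ = z_{n+1} zₙ − 1` maps solutions of
`żₙ = zₙ(z_{n+1}zₙ−1)(zₙz_{n−1}−1)(z_{n+2}z_{n+1} − z_{n−1}z_{n−2})` to solutions of
the second-level modification `ẇₙ = wₙ(wₙ+1)(w_{n+2}w_{n+1} − w_{n−1}w_{n−2})`
of the INB equation. -/
theorem stmt_15 (z : ℤ → ℝ → ℝ)
    (hz : ∀ (n : ℤ) (t : ℝ), HasDerivAt (z n)
      (z n t * (z (n + 1) t * z n t - 1) * (z n t * z (n - 1) t - 1)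
        * (z (n + 2) t * z (n + 1) t - z (n - 1) t * z (n - 2) t)) t)
    (w : ℤ → ℝ → ℝ)
    (hw : ∀ (n : ℤ) (t : ℝ), w n t = z (n + 1) t * z n t - 1) :
    ∀ (n : ℤ) (t : ℝ), HasDerivAt (w n)
      (w n t * (w n t + 1) * (w (n + 2) t * w (n + 1) t - w (n - 1) t * w (n - 2) t)) t := by
  intro n t
  have hz' (m : ℤ) := thirdLevelRhs_eq_of_miura hw m t ▸ hz m t
  have hprod := ((hz' (n + 1)).mul_of_logDeriv (hz' n)).sub_const 1
  rw [show (fun s => z (n + 1) s * z n s - 1) = w n from funext fun s => (hw n s).symm] at hprod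
  refine hprod.congr_deriv ?_
  rw [show n + 1 + 1 = n + 2 by ring, add_sub_cancel_right, show n + 1 - 2 = n - 1 by ring,
    show z (n + 1) t * z n t = w n t + 1 by rw [hw n, sub_add_cancel]]
  ring
end
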